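/- arXiv:math/0304165 — 7 statements merged into one kernel-verified Lean document; each statement's English description precedes it below -/
import Mathlib

section
/- Let E and F be finite-dimensional real normed vector spaces with F of real dimension 2, U ⊆ E and V ⊆ F open sets, J an almost complex structure on U and J' an almost complex structure on V. Let π : U → V be a smooth pseudoholomorphic map (Dπ(x) ∘ J(x) = J'(π(x)) ∘ Dπ(x) for all x), and let X, Y be smooth vector fields on U admitting smooth π-related vector fields X', Y' on V (Dπ(x)(X(x)) = X'(π(x)) and Dπ(x)(Y(x)) = Y'(π(x)) for all x). Then Dπ(x)(N_J(X,Y)(x)) = 0 for all x ∈ U, i.e. the values of the Nijenhuis tensor of J lie in the kernels of Dπ (the image of N_J is tangent to the fibers of π). -/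
/-!
Brackets of `π`-related vector fields are `π`-related (the symmetry of `D²π` cancels the
second-order terms), and pseudoholomorphy makes `JX, JY` `π`-related to `J'X', J'Y'`; hence
`Dπ(N_J(X,Y)) = N_{J'}(X',Y') ∘ π`. Differentiating `J'² = -1` gives `J' ∘ DJ' = -DJ' ∘ J'`,
which turns `N_{J'}(X',Y')` at a point into an expression `B(X',Y')` in `DJ'` alone. `B` is
bilinear with `B(u,u) = B(u,J'u) = 0`, and in real dimension 2 the vectors `u, J'u` span
whenever `u ≠ 0`, so `B = 0`.
-/

/-- The Lie bracket of two vector fields on a normed space,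
`[X,Y](x) = DY(x)(X(x)) - DX(x)(Y(x))`. -/
noncomputable def lieB {G : Type*} [NormedAddCommGroup G] [NormedSpace ℝ G]
    (X Y : G → G) : G → G :=
  fun p => fderiv ℝ Y p (X p) - fderiv ℝ X p (Y p)

/-- The Nijenhuis tensor `N_J(X,Y) = [JX,JY] - J[JX,Y] - J[X,JY] - [X,Y]`. -/
noncomputable def nijenhuis {G : Type*} [NormedAddCommGroup G] [NormedSpace ℝ G]
    (J : G → G →L[ℝ] G) (X Y : G → G) : G → G :=
  fun p =>
    lieB (fun q => J q (X q)) (fun q => J q (Y q)) p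
      - J p (lieB (fun q => J q (X q)) Y p)
      - J p (lieB X (fun q => J q (Y q)) p)
      - lieB X Y p

open Filter Topology

section Algebra

variable {F G : Type*} [NormedAddCommGroup F] [NormedSpace ℝ F]
  [NormedAddCommGroup G] [NormedSpace ℝ G]

lemma linearIndependent_pair_apply_of_apply_apply_eq_neg (J : F →L[ℝ] F)
    (hJJ : ∀ z, J (J z) = -z) {u : F} (hu : u ≠ 0) : LinearIndependent ℝ ![u, J u] := by
  refine (LinearIndependent.pair_iff' hu).2 fun a ha => ?_
  have hsq : (a * a + 1) • u = 0 := by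
    rw [add_smul, one_smul, mul_smul, ha, ← map_smul, ha, hJJ, neg_add_cancel]
  exact hu ((smul_eq_zero.1 hsq).resolve_left (by nlinarith [mul_self_nonneg a]))

lemma exists_smul_add_smul_apply_eq_of_finrank_eq_two (hF2 : Module.finrank ℝ F = 2)
    (J : F →L[ℝ] F) (hJJ : ∀ z, J (J z) = -z) {u : F} (hu : u ≠ 0) (v : F) :
    ∃ a b : ℝ, a • u + b • J u = v := by
  have hspan := (linearIndependent_pair_apply_of_apply_apply_eq_neg J hJJ hu)
    |>.span_eq_top_of_card_eq_finrank (by simp [hF2])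
  rw [Matrix.range_cons, Matrix.range_cons, Matrix.range_empty, Set.union_empty,
    Set.singleton_union] at hspan
  exact Submodule.mem_span_pair.1 (hspan ▸ Submodule.mem_top)

lemma nijenhuis_form_eq_zero_of_finrank_eq_two (hF2 : Module.finrank ℝ F = 2)
    (J : F →L[ℝ] F) (hJJ : ∀ z, J (J z) = -z) (DJ : F →L[ℝ] F →L[ℝ] G) (u v : F) :
    DJ (J u) v - DJ (J v) u - DJ v (J u) + DJ u (J v) = 0 := by
  rcases eq_or_ne u 0 with rfl | hu
  · simp
  obtain ⟨a, b, rfl⟩ := exists_smul_add_smul_apply_eq_of_finrank_eq_two hF2 J hJJ hu v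
  simp only [map_add, map_smul, add_apply, smul_apply, hJJ, map_neg, neg_apply]
  module

end Algebra

section AlmostComplex

variable {F : Type*} [NormedAddCommGroup F] [NormedSpace ℝ F] {J : F → F →L[ℝ] F} {y : F}

lemma apply_apply_eq_neg_of_comp_self {L : F →L[ℝ] F}
    (hL : L.comp L = -ContinuousLinearMap.id ℝ F) (z : F) : L (L z) = -z := by
  simpa using congrArg (fun M : F →L[ℝ] F => M z) hL

lemma apply_fderiv_apply_eq_neg_of_comp_self (hJ : DifferentiableAt ℝ J y)
    (hJ2 : ∀ᶠ q in 𝓝 y, (J q).comp (J q) = -ContinuousLinearMap.id ℝ F) (w z : F) :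
    J y (fderiv ℝ J y w z) = -fderiv ℝ J y w (J y z) := by
  have hJz : DifferentiableAt ℝ (fun q => J q z) y := hJ.clm_apply (differentiableAt_const z)
  have hconst : (fun q => J q (J q z)) =ᶠ[𝓝 y] fun _ => -z := by
    filter_upwards [hJ2] with q hq using apply_apply_eq_neg_of_comp_self hq z
  have hderiv := congrArg (fun L : F →L[ℝ] F => L w) hconst.fderiv_eq
  rw [fderiv_clm_apply hJ hJz, fderiv_clm_apply hJ (differentiableAt_const z)] at hderiv
  simp only [add_apply, ContinuousLinearMap.coe_comp,
    Function.comp_apply, ContinuousLinearMap.flip_apply, zero_apply,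
    fderiv_const_apply, ContinuousLinearMap.comp_zero, zero_add] at hderiv
  exact eq_neg_of_add_eq_zero_left hderiv

lemma nijenhuis_apply_eq_of_comp_self (hJ : DifferentiableAt ℝ J y)
    (hJ2 : ∀ᶠ q in 𝓝 y, (J q).comp (J q) = -ContinuousLinearMap.id ℝ F) {X Y : F → F}
    (hX : DifferentiableAt ℝ X y) (hY : DifferentiableAt ℝ Y y) :
    nijenhuis J X Y y = fderiv ℝ J y (J y (X y)) (Y y) - fderiv ℝ J y (J y (Y y)) (X y)
      - fderiv ℝ J y (Y y) (J y (X y)) + fderiv ℝ J y (X y) (J y (Y y)) := by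
  simp only [nijenhuis, lieB, fderiv_clm_apply hJ hX, fderiv_clm_apply hJ hY, add_apply,
    ContinuousLinearMap.coe_comp, Function.comp_apply, ContinuousLinearMap.flip_apply,
    map_sub, map_add, apply_apply_eq_neg_of_comp_self hJ2.self_of_nhds,
    apply_fderiv_apply_eq_neg_of_comp_self hJ hJ2]
  abel

lemma nijenhuis_eq_zero_of_finrank_eq_two (hF2 : Module.finrank ℝ F = 2)
    (hJ : DifferentiableAt ℝ J y)
    (hJ2 : ∀ᶠ q in 𝓝 y, (J q).comp (J q) = -ContinuousLinearMap.id ℝ F) {X Y : F → F}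
    (hX : DifferentiableAt ℝ X y) (hY : DifferentiableAt ℝ Y y) :
    nijenhuis J X Y y = 0 := by
  rw [nijenhuis_apply_eq_of_comp_self hJ hJ2 hX hY]
  exact nijenhuis_form_eq_zero_of_finrank_eq_two hF2 (J y)
    (apply_apply_eq_neg_of_comp_self hJ2.self_of_nhds) _ _ _

end AlmostComplex

section Related

variable {E F : Type*} [NormedAddCommGroup E] [NormedSpace ℝ E]
  [NormedAddCommGroup F] [NormedSpace ℝ F] {pr : E → F} {x : E}

lemma fderiv_apply_fderiv_add_of_related (hpr : ContDiffAt ℝ 2 pr x) {Z : E → E} {Z' : F → F}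
    (hZ : DifferentiableAt ℝ Z x) (hZ' : DifferentiableAt ℝ Z' (pr x))
    (hrel : ∀ᶠ z in 𝓝 x, fderiv ℝ pr z (Z z) = Z' (pr z)) (w : E) :
    fderiv ℝ pr x (fderiv ℝ Z x w) + fderiv ℝ (fderiv ℝ pr) x w (Z x)
      = fderiv ℝ Z' (pr x) (fderiv ℝ pr x w) := by
  have hDpr : DifferentiableAt ℝ (fderiv ℝ pr) x :=
    (hpr.fderiv_right le_rfl).differentiableAt one_ne_zero
  have hrel' : (fun z => fderiv ℝ pr z (Z z)) =ᶠ[𝓝 x] Z' ∘ pr := hrel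
  have hderiv := congrArg (fun L : E →L[ℝ] F => L w) hrel'.fderiv_eq
  rw [fderiv_clm_apply hDpr hZ,
    fderiv_comp x hZ' (hpr.differentiableAt two_ne_zero)] at hderiv
  simpa using hderiv

lemma fderiv_apply_lieB_of_related (hpr : ContDiffAt ℝ 2 pr x) {X Y : E → E} {X' Y' : F → F}
    (hX : DifferentiableAt ℝ X x) (hY : DifferentiableAt ℝ Y x)
    (hX' : DifferentiableAt ℝ X' (pr x)) (hY' : DifferentiableAt ℝ Y' (pr x))
    (hXrel : ∀ᶠ z in 𝓝 x, fderiv ℝ pr z (X z) = X' (pr z))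
    (hYrel : ∀ᶠ z in 𝓝 x, fderiv ℝ pr z (Y z) = Y' (pr z)) :
    fderiv ℝ pr x (lieB X Y x) = lieB X' Y' (pr x) := by
  have hX2 := fderiv_apply_fderiv_add_of_related hpr hX hX' hXrel (Y x)
  have hY2 := fderiv_apply_fderiv_add_of_related hpr hY hY' hYrel (X x)
  rw [hYrel.self_of_nhds] at hX2
  rw [hXrel.self_of_nhds] at hY2
  simp only [lieB, map_sub]
  rw [← hX2, ← hY2, (hpr.isSymmSndFDerivAt (by simp)).eq (X x) (Y x)]
  abel

lemma eventually_related_clm_apply {J : E → E →L[ℝ] E} {J' : F → F →L[ℝ] F}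
    (hPH : ∀ᶠ z in 𝓝 x, (fderiv ℝ pr z).comp (J z) = (J' (pr z)).comp (fderiv ℝ pr z))
    {Z : E → E} {Z' : F → F} (hrel : ∀ᶠ z in 𝓝 x, fderiv ℝ pr z (Z z) = Z' (pr z)) :
    ∀ᶠ z in 𝓝 x, fderiv ℝ pr z (J z (Z z)) = J' (pr z) (Z' (pr z)) := by
  filter_upwards [hPH, hrel] with z hz hzrel
  rw [← hzrel]
  exact congrArg (fun L : E →L[ℝ] F => L (Z z)) hz

lemma fderiv_apply_nijenhuis_of_related (hpr : ContDiffAt ℝ 2 pr x)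
    {J : E → E →L[ℝ] E} {J' : F → F →L[ℝ] F}
    (hJ : DifferentiableAt ℝ J x) (hJ' : DifferentiableAt ℝ J' (pr x))
    (hPH : ∀ᶠ z in 𝓝 x, (fderiv ℝ pr z).comp (J z) = (J' (pr z)).comp (fderiv ℝ pr z))
    {X Y : E → E} {X' Y' : F → F}
    (hX : DifferentiableAt ℝ X x) (hY : DifferentiableAt ℝ Y x)
    (hX' : DifferentiableAt ℝ X' (pr x)) (hY' : DifferentiableAt ℝ Y' (pr x))
    (hXrel : ∀ᶠ z in 𝓝 x, fderiv ℝ pr z (X z) = X' (pr z))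
    (hYrel : ∀ᶠ z in 𝓝 x, fderiv ℝ pr z (Y z) = Y' (pr z)) :
    fderiv ℝ pr x (nijenhuis J X Y x) = nijenhuis J' X' Y' (pr x) := by
  have hJXrel := eventually_related_clm_apply hPH hXrel
  have hJYrel := eventually_related_clm_apply hPH hYrel
  have hJX := hJ.clm_apply hX
  have hJY := hJ.clm_apply hY
  have hJ'X' := hJ'.clm_apply hX'
  have hJ'Y' := hJ'.clm_apply hY'
  have hPHx (w : E) : fderiv ℝ pr x (J x w) = J' (pr x) (fderiv ℝ pr x w) :=
    congrArg (fun L : E →L[ℝ] F => L w) hPH.self_of_nhds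
  simp only [nijenhuis, map_sub, hPHx,
    fderiv_apply_lieB_of_related hpr hJX hJY hJ'X' hJ'Y' hJXrel hJYrel,
    fderiv_apply_lieB_of_related hpr hJX hY hJ'X' hY' hJXrel hYrel,
    fderiv_apply_lieB_of_related hpr hX hJY hX' hJ'Y' hXrel hJYrel,
    fderiv_apply_lieB_of_related hpr hX hY hX' hY' hXrel hYrel]

end Related

theorem nijenhuis_image_in_fibers_general
    {E F : Type*} [NormedAddCommGroup E] [NormedSpace ℝ E]
    [NormedAddCommGroup F] [NormedSpace ℝ F]
    (hF2 : Module.finrank ℝ F = 2)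
    (U : Set E) (V : Set F) (hU : IsOpen U) (hV : IsOpen V)
    (J : E → E →L[ℝ] E) (J' : F → F →L[ℝ] F)
    (hJs : ContDiffOn ℝ (⊤ : ℕ∞) J U)
    (hJ's : ContDiffOn ℝ (⊤ : ℕ∞) J' V)
    (hJ'2 : ∀ y ∈ V, (J' y).comp (J' y) = -ContinuousLinearMap.id ℝ F)
    (pr : E → F) (hprs : ContDiffOn ℝ (⊤ : ℕ∞) pr U) (hprV : Set.MapsTo pr U V)
    (hprPH : ∀ x ∈ U, (fderiv ℝ pr x).comp (J x) = (J' (pr x)).comp (fderiv ℝ pr x))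
    (X Y : E → E) (hX : ContDiffOn ℝ (⊤ : ℕ∞) X U) (hY : ContDiffOn ℝ (⊤ : ℕ∞) Y U)
    (X' Y' : F → F) (hX' : ContDiffOn ℝ (⊤ : ℕ∞) X' V) (hY' : ContDiffOn ℝ (⊤ : ℕ∞) Y' V)
    (hXrel : ∀ x ∈ U, fderiv ℝ pr x (X x) = X' (pr x))
    (hYrel : ∀ x ∈ U, fderiv ℝ pr x (Y x) = Y' (pr x)) :
    ∀ x ∈ U, fderiv ℝ pr x (nijenhuis J X Y x) = 0 := by
  intro x hx
  have hUx : U ∈ 𝓝 x := hU.mem_nhds hx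
  have hVx : V ∈ 𝓝 (pr x) := hV.mem_nhds (hprV hx)
  have hJ'x := (hJ's.differentiableOn (by simp)).differentiableAt hVx
  have hX'x := (hX'.differentiableOn (by simp)).differentiableAt hVx
  have hY'x := (hY'.differentiableOn (by simp)).differentiableAt hVx
  rw [fderiv_apply_nijenhuis_of_related ((hprs.contDiffAt hUx).of_le (WithTop.coe_le_coe.2 le_top))
    ((hJs.differentiableOn (by simp)).differentiableAt hUx) hJ'x (eventually_of_mem hUx hprPH)
    ((hX.differentiableOn (by simp)).differentiableAt hUx)
    ((hY.differentiableOn (by simp)).differentiableAt hUx) hX'x hY'x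
    (eventually_of_mem hUx hXrel) (eventually_of_mem hUx hYrel)]
  exact nijenhuis_eq_zero_of_finrank_eq_two hF2 hJ'x (eventually_of_mem hVx hJ'2) hX'x hY'x

/-- If the target has real dimension 2, the Nijenhuis tensor of `J` takes values
in the kernels of `Dπ` for a pseudoholomorphic map `π` (tangency to the fibers). -/
theorem nijenhuis_image_in_fibers
    {E F : Type*} [NormedAddCommGroup E] [NormedSpace ℝ E] [FiniteDimensional ℝ E]
    [NormedAddCommGroup F] [NormedSpace ℝ F] [FiniteDimensional ℝ F]
    (hF2 : Module.finrank ℝ F = 2)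
    (U : Set E) (V : Set F) (hU : IsOpen U) (hV : IsOpen V)
    (J : E → E →L[ℝ] E) (J' : F → F →L[ℝ] F)
    (hJs : ContDiffOn ℝ (⊤ : ℕ∞) J U)
    (hJ2 : ∀ x ∈ U, (J x).comp (J x) = -ContinuousLinearMap.id ℝ E)
    (hJ's : ContDiffOn ℝ (⊤ : ℕ∞) J' V)
    (hJ'2 : ∀ y ∈ V, (J' y).comp (J' y) = -ContinuousLinearMap.id ℝ F)
    (pr : E → F) (hprs : ContDiffOn ℝ (⊤ : ℕ∞) pr U) (hprV : Set.MapsTo pr U V)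
    (hprPH : ∀ x ∈ U, (fderiv ℝ pr x).comp (J x) = (J' (pr x)).comp (fderiv ℝ pr x))
    (X Y : E → E) (hX : ContDiffOn ℝ (⊤ : ℕ∞) X U) (hY : ContDiffOn ℝ (⊤ : ℕ∞) Y U)
    (X' Y' : F → F) (hX' : ContDiffOn ℝ (⊤ : ℕ∞) X' V) (hY' : ContDiffOn ℝ (⊤ : ℕ∞) Y' V)
    (hXrel : ∀ x ∈ U, fderiv ℝ pr x (X x) = X' (pr x))
    (hYrel : ∀ x ∈ U, fderiv ℝ pr x (Y x) = Y' (pr x)) :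
    ∀ x ∈ U, fderiv ℝ pr x (nijenhuis J X Y x) = 0 :=
  nijenhuis_image_in_fibers_general hF2 U V hU hV J J' hJs hJ's hJ'2 pr hprs hprV hprPH X Y hX hY X'
    Y' hX' hY' hXrel hYrel
end

section
/- Let V be a real vector space and J, N : V → V linear maps satisfying J ∘ J = -id, N ∘ J = -J ∘ N, and N ∘ N = 0. Then J₀ := J - (1/2)·J ∘ N satisfies J₀ ∘ J₀ = -id (it is again a linear complex structure), and moreover J₀ + (1/2)·J₀ ∘ N = J. -/
/-- Pointwise algebraic core of Theorem 3.8 of the paper: if `J` is a linear complex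
structure, `N` anticommutes with `J` and `N ∘ N = 0`, then `J₀ = J - (1/2)·J∘N` is
again a linear complex structure and `J₀ + (1/2)·J₀∘N = J`. -/
theorem normallyIntegrableForm_complexStructure
    {V : Type*} [AddCommGroup V] [Module ℝ V]
    (J N : V →ₗ[ℝ] V)
    (hJ : J ∘ₗ J = -LinearMap.id)
    (hNJ : N ∘ₗ J = -(J ∘ₗ N))
    (hNN : N ∘ₗ N = 0) :
    (J - (1/2 : ℝ) • (J ∘ₗ N)) ∘ₗ (J - (1/2 : ℝ) • (J ∘ₗ N)) = -LinearMap.id ∧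
    (J - (1/2 : ℝ) • (J ∘ₗ N)) + (1/2 : ℝ) • ((J - (1/2 : ℝ) • (J ∘ₗ N)) ∘ₗ N) = J := by
  have hJ' : (J * J : Module.End ℝ V) = -1 := hJ
  have hNJ' : (N * J : Module.End ℝ V) = -(J * N) := hNJ
  have hNN' : (N * N : Module.End ℝ V) = 0 := hNN
  have h1 : (J * N * J : Module.End ℝ V) = -(J * (J * N)) := by
    rw [mul_assoc, hNJ', mul_neg]
  have h2 : (J * N * (J * N) : Module.End ℝ V) = 0 := by
    calc (J * N * (J * N) : Module.End ℝ V) = J * (N * J) * N := by noncomm_ring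
      _ = J * (-(J * N)) * N := by rw [hNJ']
      _ = -(J * J * (N * N)) := by noncomm_ring
      _ = 0 := by rw [hNN', mul_zero, neg_zero]
  constructor
  · show (J - (1/2:ℝ) • (J * N)) * (J - (1/2:ℝ) • (J * N)) = -1
    have expand : (J - (1/2:ℝ) • (J * N)) * (J - (1/2:ℝ) • (J * N))
        = J * J - (1/2:ℝ) • (J * (J * N)) - (1/2:ℝ) • (J * N * J)
          + ((1/2:ℝ) * (1/2:ℝ)) • (J * N * (J * N)) := by
      noncomm_ring
      module
    rw [expand, hJ', h1, h2, smul_neg, sub_neg_eq_add, smul_zero]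
    abel
  · show (J - (1/2:ℝ) • (J * N)) + (1/2:ℝ) • ((J - (1/2:ℝ) • (J * N)) * N) = J
    have expand : (J - (1/2:ℝ) • (J * N)) * N = J * N - (1/2:ℝ) • (J * (N * N)) := by
      noncomm_ring
    rw [expand, hNN', mul_zero, smul_zero, sub_zero]
    abel
end

section
/- Let E and W be finite-dimensional real normed vector spaces and U ⊆ E open. Let J : U → (E →L[ℝ] E) and K : U → (W →L[ℝ] W) be smooth maps with J(x) ∘ J(x) = -id and K(x) ∘ K(x) = -id for all x ∈ U, and let L : U → (E →L[ℝ] (W →L[ℝ] W)) be smooth with L(x)(J(x)u) = -K(x) ∘ (L(x)(u)) for all x ∈ U, u ∈ E. Define Ĵ : U × W → ((E × W) →L[ℝ] (E × W)) by Ĵ(x,y)(u,v) = (J(x)u, K(x)v + (L(x)(u))(y)). Then Ĵ is an almost complex structure on U × W, and for all u ∈ E and w ∈ W, writing X and Y for the constant vector fields on U × W with values (u,0) and (0,w), the value N_Ĵ(X,Y)(x,y) is independent of y ∈ W and equals (0, (D_{J(x)u}K)(x)(w) - (L(x)(u))(K(x)w) + K(x)((L(x)(u))(w)) - K(x)((D_u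 K)(x)(w))), where (D_u K)(x) denotes the derivative of x ↦ K(x) at x in direction u. -/
/-- Local coordinate form of a pseudoholomorphic vector bundle structure:
`Ĵ(x,y)(u,v) = (J(x)u, K(x)v + (L(x)(u))(y))`. -/
noncomputable def Jhat {E W : Type*} [NormedAddCommGroup E] [NormedSpace ℝ E]
    [NormedAddCommGroup W] [NormedSpace ℝ W]
    (J : E → E →L[ℝ] E) (K : E → W →L[ℝ] W) (L : E → E →L[ℝ] W →L[ℝ] W) :
    E × W → (E × W) →L[ℝ] (E × W) :=
  fun p =>
    ((J p.1).comp (ContinuousLinearMap.fst ℝ E W)).prod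
      (((K p.1).comp (ContinuousLinearMap.snd ℝ E W)) +
        (((L p.1).flip p.2).comp (ContinuousLinearMap.fst ℝ E W)))

/-!
For constant fields `a`, `b` every bracket in `N_J(a, b)` only differentiates the fields
`q ↦ J q a` and `q ↦ J q b`, which gives
`N_J(a, b) = D_{Ja}(Jb) - D_{Jb}(Ja) + J D_b(Ja) - J D_a(Jb)` with no regularity assumption on `J`.
For `Ĵ` the fields are `Ĵ(u,0) = (Ju, (Lu)y)` and `Ĵ(0,w) = (0, Kw)`. The fibre coordinate `y`
enters their derivatives only through `D_v(Ĵ(u,0))` for `v` with vanishing first component,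
where it drops out, and through `Ĵ(x,y)` applied to vertical vectors, on which it acts as `K x`.
-/

open ContinuousLinearMap

theorem nijenhuis_const_apply {G : Type*} [NormedAddCommGroup G] [NormedSpace ℝ G]
    (J : G → G →L[ℝ] G) (a b p : G) :
    nijenhuis J (fun _ => a) (fun _ => b) p =
      fderiv ℝ (fun q => J q b) p (J p a) - fderiv ℝ (fun q => J q a) p (J p b)
        + J p (fderiv ℝ (fun q => J q a) p b) - J p (fderiv ℝ (fun q => J q b) p a) := by
  simp only [nijenhuis, lieB, fderiv_const_apply, zero_apply, sub_zero, zero_sub, map_neg]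
  abel

section CLMValued

variable {𝕜 X E F G : Type*} [NontriviallyNormedField 𝕜]
  [NormedAddCommGroup X] [NormedSpace 𝕜 X] [NormedAddCommGroup E] [NormedSpace 𝕜 E]
  [NormedAddCommGroup F] [NormedSpace 𝕜 F] [NormedAddCommGroup G] [NormedSpace 𝕜 G]
  {n : WithTop ℕ∞} {s : Set X}

theorem ContDiffOn.clm_prod {f : X → E →L[𝕜] F} {g : X → E →L[𝕜] G}
    (hf : ContDiffOn 𝕜 n f s) (hg : ContDiffOn 𝕜 n g s) :
    ContDiffOn 𝕜 n (fun x => (f x).prod (g x)) s :=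
  ContDiff.comp_contDiffOn (g := prodₗᵢ 𝕜) (LinearIsometryEquiv.contDiff _) (hf.prodMk hg)

theorem ContDiffOn.clm_flip {f : X → E →L[𝕜] F →L[𝕜] G} (hf : ContDiffOn 𝕜 n f s) :
    ContDiffOn 𝕜 n (fun x => (f x).flip) s :=
  ContDiff.comp_contDiffOn (g := flipₗᵢ 𝕜 E F G) (LinearIsometryEquiv.contDiff _) hf

end CLMValued

section Jhat

variable {E W : Type*} [NormedAddCommGroup E] [NormedSpace ℝ E]
  [NormedAddCommGroup W] [NormedSpace ℝ W]
  {J : E → E →L[ℝ] E} {K : E → W →L[ℝ] W} {L : E → E →L[ℝ] W →L[ℝ] W}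

@[simp]
theorem Jhat_apply (p c : E × W) :
    Jhat J K L p c = (J p.1 c.1, K p.1 c.2 + L p.1 c.1 p.2) := by
  simp [Jhat]

theorem contDiffOn_Jhat {n : WithTop ℕ∞} {U : Set E} (hJ : ContDiffOn ℝ n J U)
    (hK : ContDiffOn ℝ n K U) (hL : ContDiffOn ℝ n L U) :
    ContDiffOn ℝ n (Jhat J K L) (U ×ˢ Set.univ) := by
  have hfst : Set.MapsTo Prod.fst (U ×ˢ (Set.univ : Set W)) U := fun p hp => hp.1
  have hJ' := hJ.comp contDiffOn_fst hfst
  have hK' := hK.comp contDiffOn_fst hfst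
  have hL' := (hL.comp contDiffOn_fst hfst).clm_flip.clm_apply contDiffOn_snd
  exact (hJ'.clm_comp contDiffOn_const).clm_prod
    ((hK'.clm_comp contDiffOn_const).add (hL'.clm_comp contDiffOn_const))

theorem Jhat_comp_self {x : E} (hJ : (J x).comp (J x) = -ContinuousLinearMap.id ℝ E)
    (hK : (K x).comp (K x) = -ContinuousLinearMap.id ℝ W)
    (hL : ∀ u : E, L x (J x u) = -((K x).comp (L x u))) (y : W) :
    (Jhat J K L (x, y)).comp (Jhat J K L (x, y)) = -ContinuousLinearMap.id ℝ (E × W) := by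
  have hJ' (a : E) : J x (J x a) = -a := by simpa using congr($hJ a)
  have hK' (b : W) : K x (K x b) = -b := by simpa using congr($hK b)
  have hL' (a : E) (b : W) : L x (J x a) b = -K x (L x a b) := by simpa using congr($(hL a) b)
  refine ContinuousLinearMap.ext fun ⟨a, b⟩ => ?_
  simp [hJ', hK', hL']

theorem fderiv_Jhat_apply_const {x : E} (hJ : DifferentiableAt ℝ J x)
    (hK : DifferentiableAt ℝ K x) (hL : DifferentiableAt ℝ L x) (y : W) (c v : E × W) :
    fderiv ℝ (fun q => Jhat J K L q c) (x, y) v =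
      (fderiv ℝ J x v.1 c.1, fderiv ℝ K x v.1 c.2 + fderiv ℝ L x v.1 c.1 y + L x c.1 v.2) := by
  have hfst : HasFDerivAt (Prod.fst : E × W → E) (fst ℝ E W) (x, y) := hasFDerivAt_fst
  have h : HasFDerivAt (fun q : E × W => (J q.1 c.1, K q.1 c.2 + L q.1 c.1 q.2)) _ (x, y) :=
    ((hJ.hasFDerivAt.comp (x, y) hfst).clm_apply (hasFDerivAt_const c.1 _)).prodMk
      (((hK.hasFDerivAt.comp (x, y) hfst).clm_apply (hasFDerivAt_const c.2 _)).add
        (((hL.hasFDerivAt.comp (x, y) hfst).clm_apply (hasFDerivAt_const c.1 _)).clm_apply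
          hasFDerivAt_snd))
  simp only [Jhat_apply]
  rw [h.fderiv]
  simp only [comp_zero, zero_add, prod_apply, flip_apply, comp_apply, coe_fst', add_apply,
    coe_snd', Prod.mk.injEq, true_and]
  abel

end Jhat

theorem nijenhuis_horizontal_vertical_constant_along_fibers_general
    {E W : Type*} [NormedAddCommGroup E] [NormedSpace ℝ E]
    [NormedAddCommGroup W] [NormedSpace ℝ W]
    (U : Set E) (hU : IsOpen U)
    (J : E → E →L[ℝ] E) (K : E → W →L[ℝ] W) (L : E → E →L[ℝ] W →L[ℝ] W)
    (hJs : ContDiffOn ℝ (⊤ : ℕ∞) J U)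
    (hKs : ContDiffOn ℝ (⊤ : ℕ∞) K U)
    (hLs : ContDiffOn ℝ (⊤ : ℕ∞) L U)
    (hJ2 : ∀ x ∈ U, (J x).comp (J x) = -ContinuousLinearMap.id ℝ E)
    (hK2 : ∀ x ∈ U, (K x).comp (K x) = -ContinuousLinearMap.id ℝ W)
    (hL : ∀ x ∈ U, ∀ u : E, L x (J x u) = -((K x).comp (L x u))) :
    (ContDiffOn ℝ (⊤ : ℕ∞) (Jhat J K L) (U ×ˢ (Set.univ : Set W)) ∧
      ∀ p ∈ U ×ˢ (Set.univ : Set W),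
        (Jhat J K L p).comp (Jhat J K L p) = -ContinuousLinearMap.id ℝ (E × W)) ∧
    ∀ x ∈ U, ∀ y : W, ∀ u : E, ∀ w : W,
      nijenhuis (Jhat J K L) (fun _ => ((u, 0) : E × W)) (fun _ => ((0, w) : E × W)) (x, y)
        = ((0 : E),
            (fderiv ℝ K x (J x u)) w - (L x u) (K x w)
              + K x ((L x u) w) - K x ((fderiv ℝ K x u) w)) := by
  refine ⟨⟨contDiffOn_Jhat hJs hKs hLs, ?_⟩, ?_⟩
  · rintro ⟨x, y⟩ ⟨hx, -⟩
    exact Jhat_comp_self (hJ2 x hx) (hK2 x hx) (hL x hx) y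
  intro x hx y u w
  have hxU : U ∈ nhds x := hU.mem_nhds hx
  have hJd := (hJs.differentiableOn (by simp)).differentiableAt hxU
  have hKd := (hKs.differentiableOn (by simp)).differentiableAt hxU
  have hLd := (hLs.differentiableOn (by simp)).differentiableAt hxU
  rw [nijenhuis_const_apply]
  simp only [fderiv_Jhat_apply_const hJd hKd hLd]
  simp

/-- Proposition 3.4 of the paper: `Ĵ` is an almost complex structure on `U × W`,
and pairing a horizontal and a vertical argument of its Nijenhuis tensor gives a
well-defined value independent of the fiber variable `y`, given by the explicit
formula below. -/
theorem nijenhuis_horizontal_vertical_constant_along_fibers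
    {E W : Type*} [NormedAddCommGroup E] [NormedSpace ℝ E] [FiniteDimensional ℝ E]
    [NormedAddCommGroup W] [NormedSpace ℝ W] [FiniteDimensional ℝ W]
    (U : Set E) (hU : IsOpen U)
    (J : E → E →L[ℝ] E) (K : E → W →L[ℝ] W) (L : E → E →L[ℝ] W →L[ℝ] W)
    (hJs : ContDiffOn ℝ (⊤ : ℕ∞) J U)
    (hKs : ContDiffOn ℝ (⊤ : ℕ∞) K U)
    (hLs : ContDiffOn ℝ (⊤ : ℕ∞) L U)
    (hJ2 : ∀ x ∈ U, (J x).comp (J x) = -ContinuousLinearMap.id ℝ E)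
    (hK2 : ∀ x ∈ U, (K x).comp (K x) = -ContinuousLinearMap.id ℝ W)
    (hL : ∀ x ∈ U, ∀ u : E, L x (J x u) = -((K x).comp (L x u))) :
    (ContDiffOn ℝ (⊤ : ℕ∞) (Jhat J K L) (U ×ˢ (Set.univ : Set W)) ∧
      ∀ p ∈ U ×ˢ (Set.univ : Set W),
        (Jhat J K L p).comp (Jhat J K L p) = -ContinuousLinearMap.id ℝ (E × W)) ∧
    ∀ x ∈ U, ∀ y : W, ∀ u : E, ∀ w : W,
      nijenhuis (Jhat J K L) (fun _ => ((u, 0) : E × W)) (fun _ => ((0, w) : E × W)) (x, y)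
        = ((0 : E),
            (fderiv ℝ K x (J x u)) w - (L x u) (K x w)
              + K x ((L x u) w) - K x ((fderiv ℝ K x u) w)) :=
  nijenhuis_horizontal_vertical_constant_along_fibers_general U hU J K L hJs hKs hLs hJ2 hK2 hL
end

section
/- Let E and W be finite-dimensional real normed vector spaces and U ⊆ E open. Let J : U → (E →L[ℝ] E) be smooth with J(x) ∘ J(x) = -id, let K₀ : W →L[ℝ] W be a fixed linear map with K₀ ∘ K₀ = -id, and let L : U → (E →L[ℝ] (W →L[ℝ] W)) be smooth with L(x)(J(x)u) = -K₀ ∘ (L(x)(u)) and K₀ ∘ (L(x)(u)) = (L(x)(u)) ∘ K₀ for all x ∈ U, u ∈ E. Define the almost complex structure Ĵ on U × W by Ĵ(x,y)(u,v) = (J(x)u, K₀ v + (L(x)(u))(y)). Then for all u ∈ E and w ∈ W, writing X and Y for the constant vector fields on U × W with values (u,0) and (0,w), one has N_Ĵ(X,Y)(x,y) = 0 for all (x,y) ∈ U × W. -/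
/-!
For the constant fields `X = (u, 0)` and `Y = (0, w)`, the field `ĴY = (0, K₀ w)` is constant
too, so every bracket in `N(X, Y)` reduces to a derivative of `ĴX(x, y) = (J x u, L x u y)` along
a vertical vector `(0, v)`. Since `ĴX` is linear on each fibre, that derivative is `(0, L x u v)`,
and `N(X, Y) = Ĵ (0, L x u w) - (0, L x u (K₀ w)) = (0, K₀ (L x u w) - L x u (K₀ w))`, which
vanishes because `L x u` commutes with `K₀`.
-/

theorem nijenhuis_const_of_apply_const {G : Type*} [NormedAddCommGroup G] [NormedSpace ℝ G]
    (J : G → G →L[ℝ] G) (a b c : G)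
    (hc : ∀ q, J q b = c) (p : G) :
    nijenhuis J (fun _ => a) (fun _ => b) p
      = J p (fderiv ℝ (fun q => J q a) p b) - fderiv ℝ (fun q => J q a) p c := by
  simp only [nijenhuis, lieB, hc, fderiv_fun_const, Pi.zero_apply,
    zero_apply, map_sub, map_zero]
  abel

theorem fderiv_apply_inr {E W F : Type*} [NormedAddCommGroup E] [NormedSpace ℝ E]
    [NormedAddCommGroup W] [NormedSpace ℝ W] [NormedAddCommGroup F] [NormedSpace ℝ F]
    {f : E × W → F} {x : E} {y : W} (hf : DifferentiableAt ℝ f (x, y)) (v : W) :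
    fderiv ℝ f (x, y) (0, v) = fderiv ℝ (fun y' => f (x, y')) y v := by
  have h : HasFDerivAt (fun y' => f (x, y')) ((fderiv ℝ f (x, y)).comp (.inr ℝ E W)) y :=
    hf.hasFDerivAt.comp y (hasFDerivAt_prodMk_right x y)
  rw [h.fderiv]
  rfl

section Jhat

variable {E W : Type*} [NormedAddCommGroup E] [NormedSpace ℝ E]
  [NormedAddCommGroup W] [NormedSpace ℝ W]

@[simp]
theorem Jhat_apply_s4 (J : E → E →L[ℝ] E) (K : E → W →L[ℝ] W) (L : E → E →L[ℝ] W →L[ℝ] W)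
    (q : E × W) (u : E) (v : W) :
    Jhat J K L q (u, v) = (J q.1 u, K q.1 v + L q.1 u q.2) := by
  simp [Jhat]

theorem fderiv_Jhat_apply_horizontal_vertical {J : E → E →L[ℝ] E} (K : E → W →L[ℝ] W)
    {L : E → E →L[ℝ] W →L[ℝ] W} {x : E} (hJ : DifferentiableAt ℝ J x)
    (hL : DifferentiableAt ℝ L x) (y : W) (u : E) (v : W) :
    fderiv ℝ (fun q => Jhat J K L q (u, 0)) (x, y) (0, v) = (0, L x u v) := by
  simp only [Jhat_apply_s4, map_zero, zero_add]
  rw [fderiv_apply_inr (by fun_prop),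
    ((hasFDerivAt_const (J x u) y).prodMk (L x u).hasFDerivAt).fderiv]
  simp

end Jhat

theorem nijenhuis_vertical_vanishes_of_minimal_general
    {E W : Type*} [NormedAddCommGroup E] [NormedSpace ℝ E]
    [NormedAddCommGroup W] [NormedSpace ℝ W]
    (U : Set E) (hU : IsOpen U)
    (J : E → E →L[ℝ] E) (K₀ : W →L[ℝ] W) (L : E → E →L[ℝ] W →L[ℝ] W)
    (hJs : ContDiffOn ℝ (⊤ : ℕ∞) J U)
    (hLs : ContDiffOn ℝ (⊤ : ℕ∞) L U)
    (hLK : ∀ x ∈ U, ∀ u : E, K₀.comp (L x u) = (L x u).comp K₀) :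
    ∀ p ∈ U ×ˢ (Set.univ : Set W), ∀ u : E, ∀ w : W,
      nijenhuis (Jhat J (fun _ => K₀) L)
        (fun _ => ((u, 0) : E × W)) (fun _ => ((0, w) : E × W)) p
        = (0 : E × W) := by
  rintro ⟨x, y⟩ ⟨hx, -⟩ u w
  have hJ : DifferentiableAt ℝ J x :=
    (hJs.contDiffAt (hU.mem_nhds hx)).differentiableAt (by simp)
  have hL : DifferentiableAt ℝ L x :=
    (hLs.contDiffAt (hU.mem_nhds hx)).differentiableAt (by simp)
  rw [nijenhuis_const_of_apply_const _ _ _ (0, K₀ w) (by simp),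
    fderiv_Jhat_apply_horizontal_vertical _ hJ hL, fderiv_Jhat_apply_horizontal_vertical _ hJ hL]
  have hcomm : K₀ (L x u w) = L x u (K₀ w) := DFunLike.congr_fun (hLK x hx u) w
  simp [hcomm]

/-- Local-model form of the Lemma in the proof of Theorem 2.1 of the paper: for a
pseudoholomorphic bundle structure with constant complex structure `K₀` on the fibers
and complex-linear horizontal datum `L`, the Nijenhuis tensor vanishes whenever one
argument is vertical (normal integrability). -/
theorem nijenhuis_vertical_vanishes_of_minimal
    {E W : Type*} [NormedAddCommGroup E] [NormedSpace ℝ E] [FiniteDimensional ℝ E]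
    [NormedAddCommGroup W] [NormedSpace ℝ W] [FiniteDimensional ℝ W]
    (U : Set E) (hU : IsOpen U)
    (J : E → E →L[ℝ] E) (K₀ : W →L[ℝ] W) (L : E → E →L[ℝ] W →L[ℝ] W)
    (hJs : ContDiffOn ℝ (⊤ : ℕ∞) J U)
    (hLs : ContDiffOn ℝ (⊤ : ℕ∞) L U)
    (hJ2 : ∀ x ∈ U, (J x).comp (J x) = -ContinuousLinearMap.id ℝ E)
    (hK2 : K₀.comp K₀ = -ContinuousLinearMap.id ℝ W)
    (hL : ∀ x ∈ U, ∀ u : E, L x (J x u) = -(K₀.comp (L x u)))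
    (hLK : ∀ x ∈ U, ∀ u : E, K₀.comp (L x u) = (L x u).comp K₀) :
    ∀ p ∈ U ×ˢ (Set.univ : Set W), ∀ u : E, ∀ w : W,
      nijenhuis (Jhat J (fun _ => K₀) L)
        (fun _ => ((u, 0) : E × W)) (fun _ => ((0, w) : E × W)) p
        = (0 : E × W) :=
  nijenhuis_vertical_vanishes_of_minimal_general U hU J K₀ L hJs hLs hLK
end

section
/- Let V be a real vector space and J : V → V a linear complex structure (J ∘ J = -id). Let P : V × V → V be real-bilinear with P(u, Jv) = -J·P(u,v) for all u, v, and P(u,v) - P(v,u) = P(Ju,Jv) - P(Jv,Ju) for all u, v. Define B(u,v) := -(1/2)·J·P(u,v) and Φ(u,v) := -(1/2)(B(u,v) + B(v,u)) + (1/4)·J·(B(Ju,v) + B(Jv,u) - B(u,Jv) - B(v,Ju)). Then Φ is symmetric, Φ(u,v) = Φ(v,u), and it solves P(u,v) = Φ(u, Jv) - J·Φ(u,v) for all u, v ∈ V. -/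
/-- `B(u,v) = -(1/2)·J·P(u,v)`. -/
noncomputable def Bmap {V : Type*} [AddCommGroup V] [Module ℝ V]
    (J : V → V) (P : V → V → V) : V → V → V :=
  fun u v => -((1/2 : ℝ) • J (P u v))

/-- `Φ(u,v) = -(1/2)(B(u,v)+B(v,u)) + (1/4)·J·(B(Ju,v)+B(Jv,u)-B(u,Jv)-B(v,Ju))`. -/
noncomputable def PhiMap {V : Type*} [AddCommGroup V] [Module ℝ V]
    (J : V → V) (P : V → V → V) : V → V → V :=
  fun u v =>
    -((1/2 : ℝ) • (Bmap J P u v + Bmap J P v u))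
      + (1/4 : ℝ) • J (Bmap J P (J u) v + Bmap J P (J v) u
          - Bmap J P u (J v) - Bmap J P v (J u))

/-- Linear-algebra step in the proof of Theorem 4.1 of the paper: if `P` is bilinear,
`J`-antilinear in its second argument and satisfies
`P(u,v) - P(v,u) = P(Ju,Jv) - P(Jv,Ju)`, then the explicit `Φ` above is symmetric and
solves `P(u,v) = Φ(u,Jv) - J·Φ(u,v)`. -/
theorem symbol_equation_solution
    {V : Type*} [AddCommGroup V] [Module ℝ V]
    (J : V →ₗ[ℝ] V) (hJ : ∀ v, J (J v) = -v)
    (P : V →ₗ[ℝ] V →ₗ[ℝ] V)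
    (hP1 : ∀ u v, P u (J v) = -(J (P u v)))
    (hP2 : ∀ u v, P u v - P v u = P (J u) (J v) - P (J v) (J u)) :
    (∀ u v, PhiMap J (fun a b => P a b) u v = PhiMap J (fun a b => P a b) v u) ∧
    (∀ u v, P u v = PhiMap J (fun a b => P a b) u (J v)
      - J (PhiMap J (fun a b => P a b) u v)) := by
  constructor
  · intro u v
    simp only [PhiMap, Bmap, map_add, map_sub, map_neg, map_smul]
    module
  · intro u v
    have key : ∀ a b : V, PhiMap J (fun a b => P a b) a b
        = (3/8 : ℝ) • J (P a b + P b a) + (1/8 : ℝ) • (P (J a) b + P (J b) a) := by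
      intro a b
      simp only [PhiMap, Bmap, map_add, map_sub, map_neg, map_smul, hP1, hJ,
        smul_neg, neg_neg, map_neg, LinearMap.neg_apply]
      module
    rw [key, key]
    have h := hP2 u v
    rw [hP1, hP1] at h
    simp only [hP1, hJ, map_add, map_smul, map_neg, LinearMap.map_neg, LinearMap.neg_apply]
    linear_combination (norm := module) (1/4 : ℝ) • h
end

section
/- Let E be a finite-dimensional real normed vector space, U ⊆ E open, J an almost complex structure on U, and Γ : U → (E →L[ℝ] E →L[ℝ] E) the Christoffel symbols of an arbitrary linear connection on U. Define Γ̂(x)(u)(v) := (1/2)·(Γ(x)(u)(v) - J(x)((D_u J)(x)(v)) - J(x)(Γ(x)(u)(J(x)v))), which are the Christoffel symbols of the connection ∇̂ = (1/2)(∇ - J∇J), i.e. ∇̂_X Y = (1/2)(∇_X Y - J∇_X(JY)). Then Γ̂ is an almost complex connection for J: (D_u J)(x)(v) + Γ̂(x)(u)(J(x)v) - J(x)(Γ̂(x)(u)(v)) = 0 for all x ∈ U and u, v ∈ E. -/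
/-! Differentiating `J ∘ J = -id` shows that `D_u J` anticommutes with `J`. With this and
`J² = -1`, the terms of `∇̂J` coming from `Γ` cancel pairwise and those coming from `D_u J`
add up to `D_u J - D_u J = 0`. -/

open Filter Topology ContinuousLinearMap

theorem fderiv_anticomm_of_eventually_sq_eq_neg_id
    {𝕜 : Type*} [NontriviallyNormedField 𝕜]
    {E : Type*} [NormedAddCommGroup E] [NormedSpace 𝕜 E]
    {J : E → E →L[𝕜] E} {x : E} (hd : DifferentiableAt 𝕜 J x)
    (hJ2 : ∀ᶠ y in 𝓝 x, (J y).comp (J y) = -ContinuousLinearMap.id 𝕜 E) (u : E) :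
    (J x).comp (fderiv 𝕜 J x u) + (fderiv 𝕜 J x u).comp (J x) = 0 := by
  have hprod := hd.hasFDerivAt.clm_comp hd.hasFDerivAt
  have hconst : HasFDerivAt (fun y => (J y).comp (J y)) (0 : E →L[𝕜] E →L[𝕜] E) x :=
    (hasFDerivAt_const _ x).congr_of_eventuallyEq hJ2
  simpa using congrArg (· u) (hprod.unique hconst)

theorem averaged_christoffel_condition
    {M : Type*} [TopologicalSpace M] [AddCommGroup M] [Module ℝ M] (J D G : M →L[ℝ] M)
    (hJ : ∀ w, J (J w) = -w) (hDJ : ∀ w, D (J w) = -J (D w)) (v : M) :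
    D v + (1/2 : ℝ) • (G (J v) - J (D (J v)) - J (G (J (J v))))
      - J ((1/2 : ℝ) • (G v - J (D v) - J (G (J v)))) = 0 := by
  simp only [hDJ, hJ, map_neg, map_smul, map_sub]
  module

theorem averaged_connection_is_almost_complex_general
    {E : Type*} [NormedAddCommGroup E] [NormedSpace ℝ E]
    (U : Set E) (hU : IsOpen U)
    (J : E → E →L[ℝ] E)
    (hJs : ContDiffOn ℝ (⊤ : ℕ∞) J U)
    (hJ2 : ∀ x ∈ U, (J x).comp (J x) = -ContinuousLinearMap.id ℝ E)
    (Γ : E → E →L[ℝ] E →L[ℝ] E) :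
    ∀ x ∈ U, ∀ u v : E,
      fderiv ℝ J x u v
        + (1/2 : ℝ) • (Γ x u (J x v) - J x (fderiv ℝ J x u (J x v))
            - J x (Γ x u (J x (J x v))))
        - J x ((1/2 : ℝ) • (Γ x u v - J x (fderiv ℝ J x u v) - J x (Γ x u (J x v)))) = 0 := by
  intro x hx u v
  have hUx : U ∈ 𝓝 x := hU.mem_nhds hx
  have hJJ (w : E) : J x (J x w) = -w := by
    simpa using congrArg (· w) (hJ2 x hx)
  have hanti := fderiv_anticomm_of_eventually_sq_eq_neg_id
    ((hJs.contDiffAt hUx).differentiableAt (by simp)) (eventually_of_mem hUx hJ2) u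
  have hDJ (w : E) : fderiv ℝ J x u (J x w) = -J x (fderiv ℝ J x u w) :=
    eq_neg_of_add_eq_zero_left (by simpa [add_comm] using congrArg (· w) hanti)
  exact averaged_christoffel_condition (J x) (fderiv ℝ J x u) (Γ x u) hJJ hDJ v

/-- Appendix A of the paper: any linear connection can be made almost complex by the
averaging `∇ ↦ ∇̂ = (1/2)(∇ - J∇J)`; in Christoffel symbols,
`Γ̂(x)(u)(v) = (1/2)(Γ(x)(u)(v) - J(x)((D_u J)(x)(v)) - J(x)(Γ(x)(u)(J(x)v)))`
satisfies the almost complex connection condition `∇̂J = 0`. -/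
theorem averaged_connection_is_almost_complex
    {E : Type*} [NormedAddCommGroup E] [NormedSpace ℝ E] [FiniteDimensional ℝ E]
    (U : Set E) (hU : IsOpen U)
    (J : E → E →L[ℝ] E)
    (hJs : ContDiffOn ℝ (⊤ : ℕ∞) J U)
    (hJ2 : ∀ x ∈ U, (J x).comp (J x) = -ContinuousLinearMap.id ℝ E)
    (Γ : E → E →L[ℝ] E →L[ℝ] E)
    (hΓs : ContDiffOn ℝ (⊤ : ℕ∞) Γ U) :
    ∀ x ∈ U, ∀ u v : E,
      fderiv ℝ J x u v
        + (1/2 : ℝ) • (Γ x u (J x v) - J x (fderiv ℝ J x u (J x v))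
            - J x (Γ x u (J x (J x v))))
        - J x ((1/2 : ℝ) • (Γ x u v - J x (fderiv ℝ J x u v) - J x (Γ x u (J x v)))) = 0 :=
  averaged_connection_is_almost_complex_general U hU J hJs hJ2 Γ
end

section
/- Let ω ∈ ℂ with Im ω > 0 and λ ∈ ℂ with exp(-Im ω) < |λ| ≤ 1 and λ ≠ 1. If f : ℂ → ℂ is holomorphic on all of ℂ and satisfies f(z + 2π) = f(z) and f(z + ω) = λ·f(z) for all z ∈ ℂ, then f is identically zero. -/
/-!
Multiplying a section by its reflection `z ↦ f (w - z)` cancels the multipliers, so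
`z ↦ f z * f (w - z)` is an entire elliptic function, hence constant by Liouville:
`f z * f (w - z) = f 0 * f w`. Differentiating in `z` gives `f' = c f`, so `f` is a multiple of
`exp (c z)`. Periodicity in `2π` forces `c = n i` with `n ∈ ℤ`, and then `|λ| = exp (-n Im ω)`,
which lies in `(exp (-Im ω), 1]` only for `n = 0`, i.e. `λ = 1`.
-/

open Complex Function

theorem Complex.linearIndependent_ofReal_of_im_ne_zero {r : ℝ} (hr : r ≠ 0) {ω : ℂ}
    (hω : ω.im ≠ 0) : LinearIndependent ℝ ![(r : ℂ), ω] := by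
  refine LinearIndependent.pair_iff.mpr fun s t h => ?_
  have him := congrArg im h
  have hre := congrArg re h
  simp only [add_im, add_re, mul_im, mul_re, ofReal_re, ofReal_im, zero_im,
    zero_re, real_smul] at him hre
  have ht : t = 0 := by simpa [hω] using him
  simp_all

theorem Differentiable.apply_eq_apply_of_periodic_pair {F : Type*} [NormedAddCommGroup F]
    [NormedSpace ℂ F] (L : PeriodPair) {g : ℂ → F} (hg : Differentiable ℂ g)
    (h₁ : Periodic g L.ω₁) (h₂ : Periodic g L.ω₂) (z w : ℂ) : g z = g w := by
  refine hg.apply_eq_apply_of_bounded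
    (IsZLattice.isCompact_range_of_periodic L.lattice g hg.continuous fun z l hl => ?_).isBounded
    z w
  obtain ⟨m, n, rfl⟩ := PeriodPair.mem_lattice.mp hl
  exact (h₁.int_mul m).add_period (h₂.int_mul n) z

theorem periodic_mul_apply_sub {G K : Type*} [AddCommGroup G] [CommSemigroup K] {f : G → K}
    {p : G} {μ : K} (h : ∀ z, f (z + p) = μ * f z) (w : G) :
    Periodic (fun z => f z * f (w - z)) p := by
  intro z
  have hw := h (w - z - p)
  rw [sub_add_cancel] at hw
  simp only [h z, show w - (z + p) = w - z - p by abel, hw, mul_left_comm, mul_assoc]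

theorem PeriodPair.mul_apply_sub_eq (L : PeriodPair) {f : ℂ → ℂ} (hf : Differentiable ℂ f)
    {μ₁ μ₂ : ℂ} (h₁ : ∀ z, f (z + L.ω₁) = μ₁ * f z) (h₂ : ∀ z, f (z + L.ω₂) = μ₂ * f z)
    (w z : ℂ) : f z * f (w - z) = f 0 * f w := by
  have hg : Differentiable ℂ fun z => f z * f (w - z) := hf.mul (hf.comp (by fun_prop))
  simpa using hg.apply_eq_apply_of_periodic_pair L (periodic_mul_apply_sub h₁ w)
    (periodic_mul_apply_sub h₂ w) z 0

theorem eq_mul_exp_of_hasDerivAt {f : ℂ → ℂ} {c : ℂ} (hf : ∀ z, HasDerivAt f (c * f z) z)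
    (z : ℂ) : f z = f 0 * exp (c * z) := by
  have hderiv : ∀ x, HasDerivAt (fun z => f z * exp (-(c * z))) 0 x := by
    intro x
    have hexp : HasDerivAt (fun z => exp (-(c * z))) (exp (-(c * x)) * -(c * 1)) x :=
      (((hasDerivAt_id x).const_mul c).neg).cexp
    exact ((hf x).mul hexp).congr_deriv (by ring)
  have hconst := is_const_of_deriv_eq_zero (fun x => (hderiv x).differentiableAt)
    (fun x => (hderiv x).deriv) z 0
  simp only [mul_zero, neg_zero, exp_zero, mul_one] at hconst
  rw [← hconst, mul_assoc, ← exp_add, neg_add_cancel, exp_zero, mul_one]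

theorem deriv_mul_eq_of_mul_apply_sub {f : ℂ → ℂ} (hf : Differentiable ℂ f)
    (h : ∀ w z, f z * f (w - z) = f 0 * f w) (w : ℂ) :
    f 0 * deriv f w = deriv f 0 * f w := by
  have hreflect : HasDerivAt (fun z => f (w - z)) (deriv f (w - 0) * -1) 0 :=
    (hf (w - 0)).hasDerivAt.comp 0 ((hasDerivAt_id 0).const_sub w)
  have hprod := (hf 0).hasDerivAt.mul hreflect
  rw [show f * (fun z => f (w - z)) = fun _ => f 0 * f w from funext (h w)] at hprod
  have := hprod.unique (hasDerivAt_const _ _)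
  rw [sub_zero] at this
  linear_combination -this

theorem exists_eq_mul_exp_of_mul_apply_sub {f : ℂ → ℂ} (hf : Differentiable ℂ f)
    (h : ∀ w z, f z * f (w - z) = f 0 * f w) : ∃ c, ∀ z, f z = f 0 * exp (c * z) := by
  by_cases h0 : f 0 = 0
  · refine ⟨0, fun z => ?_⟩
    have hz := h (2 * z) z
    rw [show 2 * z - z = z by ring, h0, zero_mul, mul_self_eq_zero] at hz
    simp [hz, h0]
  · refine ⟨deriv f 0 / f 0, eq_mul_exp_of_hasDerivAt fun z => ?_⟩
    refine (hf z).hasDerivAt.congr_deriv ?_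
    rw [div_mul_eq_mul_div, eq_div_iff h0]
    linear_combination deriv_mul_eq_of_mul_apply_sub hf h z

theorem exists_int_eq_mul_I_of_exp_mul_two_pi_eq_one {c : ℂ}
    (h : exp (c * (2 * Real.pi)) = 1) : ∃ n : ℤ, c = n * I := by
  obtain ⟨n, hn⟩ := exp_eq_one_iff.mp h
  refine ⟨n, mul_right_cancel₀ (b := 2 * (Real.pi : ℂ)) (by simp [Real.pi_ne_zero]) ?_⟩
  rw [hn]
  ring

theorem eq_zero_of_norm_exp_int_mul_I_mul_mem_Ioc {ω : ℂ} (hω : 0 < ω.im) {n : ℤ}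
    (h : ‖exp (n * I * ω)‖ ∈ Set.Ioc (Real.exp (-ω.im)) 1) : n = 0 := by
  have hnorm : ‖exp (n * I * ω)‖ = Real.exp (-(n * ω.im)) := by
    simp [norm_exp, mul_re]
  rw [hnorm, Set.mem_Ioc, Real.exp_lt_exp, Real.exp_le_one_iff] at h
  have hlt : n < 1 := by exact_mod_cast (show (n : ℝ) < 1 by nlinarith [h.1])
  have hnonneg : 0 ≤ n := by exact_mod_cast (show (0 : ℝ) ≤ n by nlinarith [h.2])
  omega

/-- The integrable case of Proposition 6.4 of the paper: a holomorphic section of a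
line bundle with normalized multiplier `λ ≠ 1`, `exp(-Im ω) < |λ| ≤ 1`, over the
elliptic curve `ℂ/(2πℤ + ωℤ)` vanishes identically. -/
theorem holomorphic_section_vanishes
    (ω lam : ℂ) (hω : 0 < ω.im)
    (hlam1 : Real.exp (-ω.im) < ‖lam‖) (hlam2 : ‖lam‖ ≤ 1)
    (hlam3 : lam ≠ 1)
    (f : ℂ → ℂ) (hf : Differentiable ℂ f)
    (h1 : ∀ z, f (z + 2 * Real.pi) = f z)
    (h2 : ∀ z, f (z + ω) = lam * f z) :
    ∀ z, f z = 0 := by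
  let L : PeriodPair := ⟨2 * Real.pi, ω,
    by exact_mod_cast linearIndependent_ofReal_of_im_ne_zero (by positivity) hω.ne'⟩
  have hfun := L.mul_apply_sub_eq hf (μ₁ := 1) (by simpa using h1) h2
  obtain ⟨c, hc⟩ := exists_eq_mul_exp_of_mul_apply_sub hf hfun
  suffices h0 : f 0 = 0 from fun z => by rw [hc z, h0, zero_mul]
  by_contra h0
  have hc2π : exp (c * (2 * Real.pi)) = 1 := by
    have h := h1 0
    rw [zero_add, hc] at h
    exact mul_left_cancel₀ h0 (h.trans (mul_one _).symm)
  have hcω : exp (c * ω) = lam := by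
    have h := h2 0
    rw [zero_add, hc] at h
    exact mul_left_cancel₀ h0 (h.trans (mul_comm _ _))
  obtain ⟨n, rfl⟩ := exists_int_eq_mul_I_of_exp_mul_two_pi_eq_one hc2π
  have hn : n = 0 := eq_zero_of_norm_exp_int_mul_I_mul_mem_Ioc hω (hcω ▸ ⟨hlam1, hlam2⟩)
  exact hlam3 (by simp [← hcω, hn])
end
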